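/- For the Finsler space with F² = e^{−x2} y1 (y2³+y3³+y4³)^{1/3} on {y2 ≠ 0, y4 ≠ 0}, a horizontal vector W = W^i h_i satisfies W^j R̊^i_{hjk} = 0 for all h,i,k (where R̊ is the h-curvature of the Berwald connection) if and only if W² = W³ = W⁴ = 0; i.e., the nullity space N_{R̊} is exactly the span of h₁. -/

import Mathlib

/-! The Barthel coefficients `N^i_j` do not depend on `x`, so
`ℜ^i_{jk} = N^m_k ∂̇_m N^i_j − N^m_j ∂̇_m N^i_k` (indices start at 0, as in Lean).
The column `N^i_0` vanishes, hence so do `ℜ^i_{0k}` and `R̊^i_{h0k}`, and `W 0` is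
unconstrained. Since `R̊^i_{hkk} = 0`, the equation indexed by `(i, h, k)` involves at most two
of the unknowns `W 1, W 2, W 3`. On `U` the components `R̊^3_{313} = -(9/16) (y₃/y₁)²`,
`R̊^2_{123} = (9/16) (y₃/y₁)²` and `R̊^2_{332} = (9/8) y₃/y₁` do not vanish while
`R̊^3_{323} = 0`, so the equations for `(3,3,3)`, `(2,1,3)` and `(2,3,2)` give successively
`W 1 = 0`, `W 2 = 0` and `W 3 = 0`. -/

open scoped BigOperators

/-- Partial derivative of `f` with respect to the `j`-th coordinate at `v`. -/
noncomputable def pd {n : ℕ} (f : (Fin n → ℝ) → ℝ) (j : Fin n) (v : Fin n → ℝ) : ℝ :=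
  deriv (fun t => f (Function.update v j t)) (v j)

/-- The open set `U`: `y2 ≠ 0`, `y4 ≠ 0`. -/
def U (x y : Fin 4 → ℝ) : Prop := y 1 ≠ 0 ∧ y 3 ≠ 0

/-- The Barthel connection coefficients `N^i_j` of `F² = e^{−x2} y1 (y2³+y3³+y4³)^{1/3}`. -/
noncomputable def NB (x y : Fin 4 → ℝ) : Fin 4 → Fin 4 → ℝ := fun i j =>
  (!![0, 0, 0, 0;
      0, -(4 * (y 1) ^ 3 + (y 2) ^ 3 + (y 3) ^ 3) / (4 * (y 1) ^ 2),
        (3 / 4) * (y 2) ^ 2 / (y 1), (3 / 4) * (y 3) ^ 2 / (y 1);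
      0, -(3 / 4) * (y 2), -(3 / 4) * (y 1), 0;
      0, -(3 / 4) * (y 3), 0, -(3 / 4) * (y 1)] : Matrix (Fin 4) (Fin 4) ℝ) i j

/-- The curvature of the Barthel connection, `ℜ^i_{jk} = δ_j N^i_k − δ_k N^i_j`, where
`δ_k = ∂/∂x^k − N^m_k ∂/∂y^m`. -/
noncomputable def Rg (x y : Fin 4 → ℝ) (i j k : Fin 4) : ℝ :=
  (pd (fun x' => NB x' y i k) j x - ∑ m, NB x y m j * pd (fun y' => NB x y' i k) m y)
    - (pd (fun x' => NB x' y i j) k x - ∑ m, NB x y m k * pd (fun y' => NB x y' i j) m y)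

/-- The h-curvature of the Berwald connection, `R̊^i_{hjk} = ∂̇_h ℜ^i_{jk}`. -/
noncomputable def Rb (x y : Fin 4 → ℝ) (i h j k : Fin 4) : ℝ :=
  pd (fun y' => Rg x y' i j k) h y

open Function

theorem pd_const {n : ℕ} (c : ℝ) (j : Fin n) (v : Fin n → ℝ) : pd (fun _ => c) j v = 0 :=
  deriv_const _ _

theorem pd_eq_of_hasDerivAt {n : ℕ} {f : (Fin n → ℝ) → ℝ} {j : Fin n} {v : Fin n → ℝ}
    {g : ℝ → ℝ} {g' : ℝ} (hf : ∀ t, f (update v j t) = g t) (hg : HasDerivAt g g' (v j)) :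
    pd f j v = g' := by
  rw [pd, funext hf, hg.deriv]

theorem pd_const_mul_apply {n : ℕ} (c : ℝ) (r j : Fin n) (v : Fin n → ℝ) :
    pd (fun w => c * w r) j v = if j = r then c else 0 := by
  rcases eq_or_ne j r with rfl | hjr
  · rw [if_pos rfl]
    exact pd_eq_of_hasDerivAt (fun t => by rw [update_self]; rfl)
      (((hasDerivAt_id _).const_mul c).congr_deriv (mul_one c))
  · rw [if_neg hjr]
    exact pd_eq_of_hasDerivAt (fun t => by rw [update_of_ne hjr.symm]) (hasDerivAt_const _ _)

theorem pd_NB_base (x y : Fin 4 → ℝ) (i k j : Fin 4) : pd (fun x' => NB x' y i k) j x = 0 :=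
  pd_const (NB x y i k) j x

theorem NB_col_zero (x y : Fin 4 → ℝ) (i : Fin 4) : NB x y i 0 = 0 := by
  fin_cases i <;> simp [NB]

theorem Rg_eq_sum (x y : Fin 4 → ℝ) (i j k : Fin 4) :
    Rg x y i j k = ∑ m, (NB x y m k * pd (fun y' => NB x y' i j) m y
      - NB x y m j * pd (fun y' => NB x y' i k) m y) := by
  simp only [Rg, pd_NB_base, Finset.sum_sub_distrib]; ring

theorem Rg_antisymm (x y : Fin 4 → ℝ) (i j k : Fin 4) : Rg x y i k j = -Rg x y i j k :=
  (neg_sub _ _).symm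

theorem Rg_zero_left (x y : Fin 4 → ℝ) (i k : Fin 4) : Rg x y i 0 k = 0 := by
  simp [Rg_eq_sum, NB_col_zero, pd_const]

theorem Rg_3_1_3 (x y : Fin 4 → ℝ) :
    Rg x y 3 1 3 = -(3 / 16) * (y 1 ^ 3 + y 2 ^ 3 + y 3 ^ 3) / y 1 ^ 2 := by
  simp only [Rg_eq_sum, Fin.sum_univ_four, NB, Matrix.of_apply, Matrix.cons_val, pd_const_mul_apply,
    Fin.reduceEq, ↓reduceIte]
  rcases eq_or_ne (y 1) 0 with hy1 | hy1
  · simp [hy1]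
  · field_simp
    ring

theorem Rg_3_2_3 (x y : Fin 4 → ℝ) : Rg x y 3 2 3 = 9 / 16 * y 2 ^ 2 / y 1 := by
  simp only [Rg_eq_sum, Fin.sum_univ_four, NB, Matrix.of_apply, Matrix.cons_val, pd_const_mul_apply,
    pd_const, Fin.reduceEq, ↓reduceIte]
  ring

theorem Rg_2_2_3 (x y : Fin 4 → ℝ) : Rg x y 2 2 3 = -(9 / 16) * y 3 ^ 2 / y 1 := by
  simp only [Rg_eq_sum, Fin.sum_univ_four, NB, Matrix.of_apply, Matrix.cons_val, pd_const_mul_apply,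
    pd_const, Fin.reduceEq, ↓reduceIte]
  ring

theorem Rb_zero_left (x y : Fin 4 → ℝ) (i h k : Fin 4) : Rb x y i h 0 k = 0 := by
  simp only [Rb, Rg_zero_left, pd_const]

theorem Rb_self (x y : Fin 4 → ℝ) (i h j : Fin 4) : Rb x y i h j j = 0 := by
  simp only [Rb, Rg, sub_self, pd_const]

theorem Rb_3_3_1_3 (x y : Fin 4 → ℝ) : Rb x y 3 3 1 3 = -(9 / 16) * (y 3 / y 1) ^ 2 :=
  pd_eq_of_hasDerivAt (fun t => by simp [Rg_3_1_3])
    (((((hasDerivAt_pow 3 (y 3)).const_add (y 1 ^ 3 + y 2 ^ 3)).const_mul (-(3 / 16))).div_const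
      (y 1 ^ 2)).congr_deriv (by ring))

theorem Rb_3_3_2_3 (x y : Fin 4 → ℝ) : Rb x y 3 3 2 3 = 0 :=
  pd_eq_of_hasDerivAt (g := fun _ => 9 / 16 * y 2 ^ 2 / y 1) (fun t => by simp [Rg_3_2_3])
    (hasDerivAt_const _ _)

theorem Rb_2_1_2_3 (x y : Fin 4 → ℝ) (hy1 : y 1 ≠ 0) :
    Rb x y 2 1 2 3 = 9 / 16 * (y 3 / y 1) ^ 2 :=
  pd_eq_of_hasDerivAt (fun t => by
    rw [Rg_2_2_3, update_self, update_of_ne (show (3 : Fin 4) ≠ 1 by decide)]; ring)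
    (((hasDerivAt_inv hy1).const_mul (-(9 / 16) * y 3 ^ 2)).congr_deriv (by ring))

theorem Rb_2_3_3_2 (x y : Fin 4 → ℝ) : Rb x y 2 3 3 2 = 9 / 8 * (y 3 / y 1) :=
  pd_eq_of_hasDerivAt (fun t => by rw [Rg_antisymm, Rg_2_2_3]; simp)
    ((((hasDerivAt_pow 2 (y 3)).const_mul (-(9 / 16))).div_const (y 1)).neg.congr_deriv (by ring))

/-- for `F² = e^{−x2} y1 (y2³+y3³+y4³)^{1/3}` on `{y2 ≠ 0, y4 ≠ 0}`, a
horizontal vector `W = W^i h_i` satisfies `W^j R̊^i_{hjk} = 0` for all `h,i,k` iff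
`W² = W³ = W⁴ = 0`; i.e., the nullity space `N_{R̊}` is exactly the span of `h₁`. -/
theorem statement12 :
    ∀ x y : Fin 4 → ℝ, U x y → ∀ W : Fin 4 → ℝ,
      (∀ i h k : Fin 4, (∑ j, W j * Rb x y i h j k) = 0) ↔
        (W 1 = 0 ∧ W 2 = 0 ∧ W 3 = 0) := by
  rintro x y ⟨hy1, hy3⟩ W
  simp only [Fin.sum_univ_four, Rb_zero_left, mul_zero, zero_add]
  constructor
  · intro hW
    have hW1 : W 1 = 0 := by simpa [Rb_self, Rb_3_3_1_3, Rb_3_3_2_3, hy1, hy3] using hW 3 3 3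
    have hW2 : W 2 = 0 := by simpa [Rb_self, hW1, Rb_2_1_2_3 x y hy1, hy1, hy3] using hW 2 1 3
    have hW3 : W 3 = 0 := by simpa [Rb_self, hW1, Rb_2_3_3_2, hy1, hy3] using hW 2 3 2
    exact ⟨hW1, hW2, hW3⟩
  · rintro ⟨hW1, hW2, hW3⟩ i h k
    simp [hW1, hW2, hW3]
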